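/- Assume the W construction, Condition (C2), Condition (D), and Σ_{k≥1} ‖β_k‖² < ∞. For each k ≥ 1 set M_k := I_n − X(XᵀΛ_k⁻¹X)⁻¹XᵀΛ_k⁻¹. Then the expected transformed sum of squares due to regression is finite: Σ_{k≥1} E[ Y_kᵀ ( W_kᵀΛ_k⁻¹W_k − W_kᵀM_kᵀΛ_k⁻¹M_kW_k ) Y_k ] < ∞, and the random series Σ_{k≥1} Y_kᵀ ( W_kᵀΛ_k⁻¹W_k − W_kᵀM_kᵀΛ_k⁻¹M_kW_k ) Y_k converges almost surely (each summand is nonnegative). -/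

import Mathlib

/-!
Write `G = (XᵀΛ⁻¹X)⁻¹`. Since `G (XᵀΛ⁻¹X) G = G`, the summand matrix `Aₖ` equals
`(XᵀΛ⁻¹W)ᵀ G (XᵀΛ⁻¹W)`, so it is positive semidefinite, and it is dominated by `WᵀΛ⁻¹W`,
whose eigenvalues `ω_p(W)² / ω_p(Λ)` are at most `M² / c` by (C2). Hence
`0 ≤ Yₖᵀ Aₖ Yₖ ≤ (M² / c) |Yₖ|²`, and writing `Yₖ = Xβₖ + Λₖ^{1/2} Z` with `Z` standard Gaussian
gives `E |Yₖ|² ≤ 2 |Xβₖ|² + 2 tr(Λₖ) E |Z|²`, which is summable. Nonnegative random variables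
with summable expectations have an almost surely convergent sum, by monotone convergence.
-/

open MeasureTheory ProbabilityTheory Matrix
open scoped Classical

/-- The square root of a positive semidefinite matrix, as defined in the older Mathlib
(`Matrix.PosSemidef.sqrt`, removed since). -/
noncomputable def Matrix.PosSemidef.sqrt {n : ℕ} {S : Matrix (Fin n) (Fin n) ℝ}
    (h : S.PosSemidef) : Matrix (Fin n) (Fin n) ℝ :=
  (h.1.eigenvectorUnitary : Matrix (Fin n) (Fin n) ℝ) *
    diagonal ((↑) ∘ (√·) ∘ h.1.eigenvalues) *
    (star h.1.eigenvectorUnitary : Matrix (Fin n) (Fin n) ℝ)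

noncomputable def multivariateGaussian {n : ℕ} (μ : Fin n → ℝ)
    (S : Matrix (Fin n) (Fin n) ℝ) : Measure (Fin n → ℝ) :=
  if h : S.PosSemidef then
    (Measure.pi fun _ : Fin n => gaussianReal 0 1).map fun x => μ + h.sqrt.mulVec x
  else 0

namespace Matrix

-- Also true for singular `A`, where `A⁻¹ = 0`.
lemma nonsing_inv_mul_self_mul_nonsing_inv {ι R : Type*} [Fintype ι] [DecidableEq ι] [CommRing R]
    (A : Matrix ι ι R) : A⁻¹ * A * A⁻¹ = A⁻¹ := by
  rcases A.nonsing_inv_cancel_or_zero with ⟨h, -⟩ | h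
  · rw [h, Matrix.one_mul]
  · rw [h, Matrix.zero_mul, Matrix.zero_mul]

lemma mulVec_dotProduct_self_le {m l : Type*} [Fintype m] [Fintype l] (A : Matrix m l ℝ)
    (x : l → ℝ) : A *ᵥ x ⬝ᵥ A *ᵥ x ≤ (∑ i, ∑ j, A i j ^ 2) * (x ⬝ᵥ x) := by
  rw [Finset.sum_mul]
  refine Finset.sum_le_sum fun i _ => ?_
  simpa [mulVec, dotProduct, sq] using Finset.sum_mul_sq_le_sq_mul_sq Finset.univ (A i) x

lemma dotProduct_self_add_le {m : Type*} [Fintype m] (u v : m → ℝ) :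
    (u + v) ⬝ᵥ (u + v) ≤ 2 * (u ⬝ᵥ u) + 2 * (v ⬝ᵥ v) := by
  simp only [dotProduct, Finset.mul_sum, ← Finset.sum_add_distrib, Pi.add_apply]
  exact Finset.sum_le_sum fun i _ => by nlinarith [sq_nonneg (u i - v i)]

namespace PosSemidef

variable {n : ℕ} {S : Matrix (Fin n) (Fin n) ℝ} (h : S.PosSemidef)

lemma sqrt_mul_self : h.sqrt * h.sqrt = S := by
  have hU : (star h.1.eigenvectorUnitary : Matrix (Fin n) (Fin n) ℝ) *
      (h.1.eigenvectorUnitary : Matrix (Fin n) (Fin n) ℝ) = 1 := Unitary.coe_star_mul_self _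
  have hD : diagonal ((↑) ∘ (√·) ∘ h.1.eigenvalues) * diagonal ((↑) ∘ (√·) ∘ h.1.eigenvalues)
      = diagonal (RCLike.ofReal ∘ h.1.eigenvalues : Fin n → ℝ) := by
    rw [diagonal_mul_diagonal]
    congr 1; funext i
    simp [Real.mul_self_sqrt (h.eigenvalues_nonneg i)]
  conv_rhs => rw [h.1.spectral_theorem, Unitary.conjStarAlgAut_apply]
  rw [← hD]
  simp only [Matrix.PosSemidef.sqrt, Matrix.mul_assoc]
  rw [← Matrix.mul_assoc _ _ (diagonal _ * _), hU, Matrix.one_mul]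

lemma transpose_sqrt : h.sqrtᵀ = h.sqrt := by
  rw [← conjTranspose_eq_transpose_of_trivial, ← star_eq_conjTranspose]
  simp only [Matrix.PosSemidef.sqrt, star_mul, star_star, Matrix.mul_assoc]
  congr 2
  rw [star_eq_conjTranspose, diagonal_conjTranspose]
  simp

lemma sum_sq_sqrt_eq_trace : ∑ i, ∑ j, h.sqrt i j ^ 2 = S.trace := by
  conv_rhs => rw [← h.sqrt_mul_self]
  refine Finset.sum_congr rfl fun i _ => Finset.sum_congr rfl fun j _ => ?_
  rw [sq]
  exact congrArg (h.sqrt i j * ·) (congrFun (congrFun h.transpose_sqrt i) j).symm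

end PosSemidef

end Matrix

section Orthogonal

variable {ι : Type*} [Fintype ι] [DecidableEq ι] {Ψ : Matrix ι ι ℝ}

lemma conj_diagonal_mul_conj_diagonal (hΨ : Ψ * Ψᵀ = 1) (a b : ι → ℝ) :
    Ψ * diagonal a * Ψᵀ * (Ψ * diagonal b * Ψᵀ) = Ψ * diagonal (a * b) * Ψᵀ := by
  calc Ψ * diagonal a * Ψᵀ * (Ψ * diagonal b * Ψᵀ)
      = Ψ * (diagonal a * (Ψᵀ * Ψ) * diagonal b) * Ψᵀ := by simp only [Matrix.mul_assoc]
    _ = Ψ * diagonal (a * b) * Ψᵀ := by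
      rw [mul_eq_one_comm.mp hΨ, Matrix.mul_one, diagonal_mul_diagonal]; rfl

lemma inv_conj_diagonal (hΨ : Ψ * Ψᵀ = 1) {a : ι → ℝ} (ha : ∀ i, a i ≠ 0) :
    (Ψ * diagonal a * Ψᵀ)⁻¹ = Ψ * diagonal a⁻¹ * Ψᵀ := by
  refine inv_eq_right_inv ?_
  have haa : a * a⁻¹ = fun _ => 1 := funext fun i => mul_inv_cancel₀ (ha i)
  rw [conj_diagonal_mul_conj_diagonal hΨ, haa, diagonal_one, Matrix.mul_one, hΨ]

lemma transpose_conj_diagonal (a : ι → ℝ) : (Ψ * diagonal a * Ψᵀ)ᵀ = Ψ * diagonal a * Ψᵀ := by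
  simp only [transpose_mul, transpose_transpose, diagonal_transpose, Matrix.mul_assoc]

lemma dotProduct_conj_diagonal_mulVec_le (hΨ : Ψ * Ψᵀ = 1) {d : ι → ℝ} {C : ℝ}
    (hd : ∀ i, d i ≤ C) (y : ι → ℝ) : y ⬝ᵥ (Ψ * diagonal d * Ψᵀ) *ᵥ y ≤ C * (y ⬝ᵥ y) := by
  have hgap : (Ψ * diagonal (fun i => C - d i) * Ψᵀ).PosSemidef := by
    simpa [conjTranspose_eq_transpose_of_trivial] using
      (PosSemidef.diagonal fun i => sub_nonneg.2 (hd i)).mul_mul_conjTranspose_same Ψ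
  have hsplit : Ψ * diagonal (fun i => C - d i) * Ψᵀ = C • 1 - Ψ * diagonal d * Ψᵀ := by
    rw [← diagonal_sub, ← smul_one_eq_diagonal, Matrix.mul_sub, Matrix.sub_mul,
      Matrix.mul_smul, Matrix.smul_mul, Matrix.mul_one, hΨ]
  have := hgap.dotProduct_mulVec_nonneg y
  rw [hsplit, star_trivial, sub_mulVec, smul_mulVec, one_mulVec, dotProduct_sub,
    dotProduct_smul, smul_eq_mul] at this
  linarith

end Orthogonal

section Regression

variable {ι κ : Type*} [Fintype ι] [DecidableEq ι] [Fintype κ] [DecidableEq κ]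

noncomputable def residualMaker (L : Matrix ι ι ℝ) (X : Matrix ι κ ℝ) : Matrix ι ι ℝ :=
  1 - X * (Xᵀ * L⁻¹ * X)⁻¹ * Xᵀ * L⁻¹

noncomputable def ssrMatrix (L : Matrix ι ι ℝ) (X : Matrix ι κ ℝ) (W : Matrix ι ι ℝ) :
    Matrix ι ι ℝ :=
  Wᵀ * L⁻¹ * W - Wᵀ * (residualMaker L X)ᵀ * L⁻¹ * residualMaker L X * W

variable {L : Matrix ι ι ℝ}

lemma transpose_residualMaker_mul_inv_mul (hL : L.IsSymm) (X : Matrix ι κ ℝ) :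
    (residualMaker L X)ᵀ * L⁻¹ * residualMaker L X
      = L⁻¹ - L⁻¹ * X * (Xᵀ * L⁻¹ * X)⁻¹ * Xᵀ * L⁻¹ := by
  have hLinv : L⁻¹ᵀ = L⁻¹ := hL.inv
  have hGT : (Xᵀ * L⁻¹ * X)⁻¹ᵀ = (Xᵀ * L⁻¹ * X)⁻¹ := by
    rw [transpose_nonsing_inv, transpose_mul, transpose_mul, transpose_transpose, hLinv,
      Matrix.mul_assoc]
  have hGBG := nonsing_inv_mul_self_mul_nonsing_inv (Xᵀ * L⁻¹ * X)
  rw [residualMaker] at *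
  set G := (Xᵀ * L⁻¹ * X)⁻¹
  simp only [transpose_sub, transpose_one, transpose_mul, transpose_transpose, hLinv, hGT]
  calc (1 - L⁻¹ * (X * (G * Xᵀ))) * L⁻¹ * (1 - X * G * Xᵀ * L⁻¹)
      = L⁻¹ - L⁻¹ * X * G * Xᵀ * L⁻¹ - L⁻¹ * X * G * Xᵀ * L⁻¹
          + L⁻¹ * X * (G * (Xᵀ * L⁻¹ * X) * G) * Xᵀ * L⁻¹ := by
        simp only [sub_mul, mul_sub, Matrix.mul_one, Matrix.one_mul, Matrix.mul_assoc]; abel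
    _ = L⁻¹ - L⁻¹ * X * G * Xᵀ * L⁻¹ := by rw [hGBG]; abel

lemma ssrMatrix_eq (hL : L.IsSymm) (X : Matrix ι κ ℝ) (W : Matrix ι ι ℝ) :
    ssrMatrix L X W = (Xᵀ * L⁻¹ * W)ᵀ * (Xᵀ * L⁻¹ * X)⁻¹ * (Xᵀ * L⁻¹ * W) := by
  have hLinv : L⁻¹ᵀ = L⁻¹ := hL.inv
  have hsandwich : Wᵀ * (residualMaker L X)ᵀ * L⁻¹ * residualMaker L X * W
      = Wᵀ * ((residualMaker L X)ᵀ * L⁻¹ * residualMaker L X) * W := by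
    simp only [Matrix.mul_assoc]
  rw [ssrMatrix, hsandwich, transpose_residualMaker_mul_inv_mul hL]
  simp only [transpose_mul, transpose_transpose, hLinv, mul_sub, sub_mul, Matrix.mul_assoc]
  abel

lemma posSemidef_ssrMatrix (hL : L.PosSemidef) (X : Matrix ι κ ℝ) (W : Matrix ι ι ℝ) :
    (ssrMatrix L X W).PosSemidef := by
  have hL' : L.IsSymm := isHermitian_iff_isSymm.mp hL.isHermitian
  have hG : (Xᵀ * L⁻¹ * X)⁻¹.PosSemidef := by
    simpa [conjTranspose_eq_transpose_of_trivial] using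
      (hL.inv.conjTranspose_mul_mul_same X).inv
  rw [ssrMatrix_eq hL' X W]
  simpa [conjTranspose_eq_transpose_of_trivial] using
    hG.conjTranspose_mul_mul_same (Xᵀ * L⁻¹ * W)

lemma dotProduct_ssrMatrix_mulVec_le (hL : L.PosSemidef) (X : Matrix ι κ ℝ)
    (W : Matrix ι ι ℝ) (y : ι → ℝ) :
    y ⬝ᵥ ssrMatrix L X W *ᵥ y ≤ y ⬝ᵥ (Wᵀ * L⁻¹ * W) *ᵥ y := by
  have hres :=
    (hL.inv.conjTranspose_mul_mul_same (residualMaker L X * W)).dotProduct_mulVec_nonneg y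
  simp only [conjTranspose_eq_transpose_of_trivial, transpose_mul, star_trivial,
    ← Matrix.mul_assoc] at hres
  rw [ssrMatrix, sub_mulVec, dotProduct_sub]
  linarith

lemma dotProduct_ssrMatrix_conj_diagonal_mulVec_le {Ψ : Matrix ι ι ℝ} (hΨ : Ψ * Ψᵀ = 1)
    {a b : ι → ℝ} (ha : ∀ i, 0 < a i) {C : ℝ} (hC : ∀ i, b i * (a i)⁻¹ * b i ≤ C)
    (X : Matrix ι κ ℝ) (y : ι → ℝ) :
    y ⬝ᵥ ssrMatrix (Ψ * diagonal a * Ψᵀ) X (Ψ * diagonal b * Ψᵀ) *ᵥ y ≤ C * (y ⬝ᵥ y) := by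
  have hL : (Ψ * diagonal a * Ψᵀ).PosSemidef := by
    simpa [conjTranspose_eq_transpose_of_trivial] using
      (PosSemidef.diagonal fun i => (ha i).le).mul_mul_conjTranspose_same Ψ
  calc y ⬝ᵥ ssrMatrix (Ψ * diagonal a * Ψᵀ) X (Ψ * diagonal b * Ψᵀ) *ᵥ y
      ≤ y ⬝ᵥ ((Ψ * diagonal b * Ψᵀ)ᵀ * (Ψ * diagonal a * Ψᵀ)⁻¹ * (Ψ * diagonal b * Ψᵀ)) *ᵥ y :=
        dotProduct_ssrMatrix_mulVec_le hL X _ y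
    _ = y ⬝ᵥ (Ψ * diagonal (b * a⁻¹ * b) * Ψᵀ) *ᵥ y := by
        rw [transpose_conj_diagonal, inv_conj_diagonal hΨ fun i => (ha i).ne',
          conj_diagonal_mul_conj_diagonal hΨ, conj_diagonal_mul_conj_diagonal hΨ]
    _ ≤ C * (y ⬝ᵥ y) := dotProduct_conj_diagonal_mulVec_le hΨ hC y

end Regression


lemma mul_inv_mul_le_of_rpow_bounds {M c t r s w l : ℝ} (hc : 0 < c) (ht : 1 ≤ t)
    (hrs : 0 ≤ r + 2 * s) (hw₀ : 0 ≤ w) (hw : w ≤ M * t ^ (-(r + s)))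
    (hl : c * t ^ (-r) ≤ l) : w * l⁻¹ * w ≤ M ^ 2 / c := by
  have ht₀ : 0 < t := by linarith
  have hcl : 0 < c * t ^ (-r) := by positivity
  have hexp : (M * t ^ (-(r + s))) ^ 2 / (c * t ^ (-r)) = M ^ 2 / c * t ^ (-(r + 2 * s)) := by
    rw [show -(r + 2 * s) = -(r + s) + -(r + s) - -r by ring, Real.rpow_sub ht₀,
      Real.rpow_add ht₀]
    field_simp
  calc w * l⁻¹ * w = w ^ 2 / l := by ring
    _ ≤ (M * t ^ (-(r + s))) ^ 2 / (c * t ^ (-r)) :=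
      div_le_div₀ (by positivity) (pow_le_pow_left₀ hw₀ hw 2) hcl hl
    _ = M ^ 2 / c * t ^ (-(r + 2 * s)) := hexp
    _ ≤ M ^ 2 / c := mul_le_of_le_one_right (by positivity)
      (Real.rpow_le_one_of_one_le_of_nonpos ht (by linarith))

lemma ae_summable_of_summable_integral {α ι : Type*} [MeasurableSpace α] [Countable ι]
    {μ : Measure α} {f : ι → α → ℝ} (hf_nonneg : ∀ k, 0 ≤ᵐ[μ] f k)
    (hf_int : ∀ k, Integrable (f k) μ) (hsum : Summable fun k => ∫ x, f k x ∂μ) :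
    ∀ᵐ x ∂μ, Summable fun k => f k x := by
  have hlintegral : ∫⁻ x, ∑' k, ENNReal.ofReal (f k x) ∂μ ≠ ⊤ := by
    rw [lintegral_tsum fun k => (hf_int k).aemeasurable.ennreal_ofReal]
    simp_rw [← ofReal_integral_eq_lintegral_ofReal (hf_int _) (hf_nonneg _)]
    rw [← ENNReal.ofReal_tsum_of_nonneg (fun k => integral_nonneg_of_ae (hf_nonneg k)) hsum]
    exact ENNReal.ofReal_ne_top
  filter_upwards [ae_lt_top' (AEMeasurable.tsum fun k =>
      (hf_int k).aemeasurable.ennreal_ofReal) hlintegral, ae_all_iff.2 hf_nonneg]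
    with x hx hx_nonneg
  exact (ENNReal.summable_toReal hx.ne).congr fun k => ENNReal.toReal_ofReal (hx_nonneg k)

lemma summable_integral_and_ae_summable_of_le_mul {α ι : Type*} [MeasurableSpace α]
    [Countable ι] {μ : Measure α} {f g : ι → α → ℝ} {C : ℝ}
    (hg_meas : ∀ k, AEStronglyMeasurable (g k) μ) (hg_nonneg : ∀ k x, 0 ≤ g k x)
    (hgf : ∀ k x, g k x ≤ C * f k x) (hf_int : ∀ k, Integrable (f k) μ)
    (hf_sum : Summable fun k => ∫ x, f k x ∂μ) :
    (Summable fun k => ∫ x, g k x ∂μ) ∧ ∀ᵐ x ∂μ, Summable fun k => g k x := by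
  have hg_int : ∀ k, Integrable (g k) μ := fun k =>
    ((hf_int k).const_mul C).mono' (hg_meas k) (ae_of_all _ fun x => by
      rw [Real.norm_eq_abs, abs_of_nonneg (hg_nonneg k x)]; exact hgf k x)
  have hg_sum : Summable fun k => ∫ x, g k x ∂μ := by
    refine (hf_sum.mul_left C).of_nonneg_of_le (fun k => integral_nonneg (hg_nonneg k))
      fun k => ?_
    rw [← integral_const_mul]
    exact integral_mono (hg_int k) ((hf_int k).const_mul C) (hgf k)
  exact ⟨hg_sum, ae_summable_of_summable_integral
    (fun k => ae_of_all _ (hg_nonneg k)) hg_int hg_sum⟩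

section Gaussian

lemma integrable_dotProduct_self_pi_gaussianReal (n : ℕ) :
    Integrable (fun x : Fin n → ℝ => x ⬝ᵥ x) (Measure.pi fun _ => gaussianReal 0 1) := by
  have hcoord : ∀ i, Integrable (fun x : Fin n → ℝ => x i ^ 2)
      (Measure.pi fun _ => gaussianReal 0 1) := fun i =>
    (measurePreserving_eval (fun _ => gaussianReal 0 1) i).integrable_comp_of_integrable
      (memLp_id_gaussianReal 2).integrable_sq
  simpa only [dotProduct, sq] using integrable_finsetSum Finset.univ fun i _ => hcoord i

variable {n : ℕ} {μ : Fin n → ℝ} {S : Matrix (Fin n) (Fin n) ℝ}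

lemma multivariateGaussian_eq_map (hS : S.PosSemidef) :
    _root_.multivariateGaussian μ S
      = (Measure.pi fun _ => gaussianReal 0 1).map fun x => μ + hS.sqrt *ᵥ x :=
  dif_pos hS

lemma dotProduct_self_add_sqrt_mulVec_le (hS : S.PosSemidef) (x : Fin n → ℝ) :
    (μ + hS.sqrt *ᵥ x) ⬝ᵥ (μ + hS.sqrt *ᵥ x) ≤ 2 * (μ ⬝ᵥ μ) + 2 * S.trace * (x ⬝ᵥ x) := by
  have hsqrt := mulVec_dotProduct_self_le hS.sqrt x
  rw [hS.sum_sq_sqrt_eq_trace] at hsqrt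
  linarith [dotProduct_self_add_le μ (hS.sqrt *ᵥ x)]

lemma integrable_dotProduct_self_multivariateGaussian (hS : S.PosSemidef) :
    Integrable (fun x => x ⬝ᵥ x) (_root_.multivariateGaussian μ S) := by
  rw [multivariateGaussian_eq_map hS, integrable_map_measure (by fun_prop) (by fun_prop)]
  refine ((integrable_const (2 * (μ ⬝ᵥ μ))).add
    ((integrable_dotProduct_self_pi_gaussianReal n).const_mul (2 * S.trace))).mono'
    (by fun_prop) (ae_of_all _ fun x => ?_)
  rw [Real.norm_eq_abs]
  exact (abs_of_nonneg (dotProduct_self_star_nonneg _)).trans_le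
    (dotProduct_self_add_sqrt_mulVec_le hS x)

lemma integral_dotProduct_self_multivariateGaussian_le (hS : S.PosSemidef) :
    ∫ x : Fin n → ℝ, x ⬝ᵥ x ∂_root_.multivariateGaussian μ S ≤ 2 * (μ ⬝ᵥ μ)
      + 2 * S.trace * ∫ x : Fin n → ℝ, x ⬝ᵥ x ∂(Measure.pi fun _ => gaussianReal 0 1) := by
  have hint := integrable_dotProduct_self_pi_gaussianReal n
  rw [multivariateGaussian_eq_map hS, integral_map (by fun_prop) (by fun_prop)]
  calc ∫ x, (μ + hS.sqrt *ᵥ x) ⬝ᵥ (μ + hS.sqrt *ᵥ x) ∂(Measure.pi fun _ => gaussianReal 0 1)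
      ≤ ∫ x, 2 * (μ ⬝ᵥ μ) + 2 * S.trace * (x ⬝ᵥ x) ∂(Measure.pi fun _ => gaussianReal 0 1) :=
        integral_mono_of_nonneg
          (ae_of_all _ fun x => dotProduct_self_star_nonneg (_ : Fin n → ℝ))
          ((integrable_const _).add (hint.const_mul _))
          (ae_of_all _ (dotProduct_self_add_sqrt_mulVec_le hS))
    _ = _ := by
      rw [integral_add (integrable_const _) (hint.const_mul _), integral_const,
        integral_const_mul (2 * S.trace) fun x : Fin n → ℝ => x ⬝ᵥ x]
      simp

end Gaussian

section SecondMoment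

variable {Ω : Type*} [MeasurableSpace Ω] {P : Measure Ω} {n : ℕ}

lemma integrable_dotProduct_self_of_map_eq {Y : Ω → Fin n → ℝ} (hY : Measurable Y)
    {μ : Fin n → ℝ} {S : Matrix (Fin n) (Fin n) ℝ} (hS : S.PosSemidef)
    (hlaw : P.map Y = _root_.multivariateGaussian μ S) :
    Integrable (fun ω => Y ω ⬝ᵥ Y ω) P := by
  have h := integrable_dotProduct_self_multivariateGaussian (μ := μ) hS
  rw [← hlaw] at h
  exact h.comp_measurable hY

lemma summable_integral_dotProduct_self {Y : ℕ → Ω → Fin n → ℝ} (hY : ∀ k, Measurable (Y k))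
    {μ : ℕ → Fin n → ℝ} {S : ℕ → Matrix (Fin n) (Fin n) ℝ} (hS : ∀ k, (S k).PosSemidef)
    (hlaw : ∀ k, P.map (Y k) = _root_.multivariateGaussian (μ k) (S k))
    (hμ : Summable fun k => μ k ⬝ᵥ μ k) (htr : Summable fun k => (S k).trace) :
    Summable fun k => ∫ ω, Y k ω ⬝ᵥ Y k ω ∂P := by
  refine ((hμ.mul_left 2).add ((htr.mul_left 2).mul_right
    (∫ x : Fin n → ℝ, x ⬝ᵥ x ∂(Measure.pi fun _ => gaussianReal 0 1)))).of_nonneg_of_le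
    (fun k => integral_nonneg fun ω => dotProduct_self_star_nonneg _) fun k => ?_
  have hmap := integral_map (μ := P) (hY k).aemeasurable
    (f := fun x : Fin n → ℝ => x ⬝ᵥ x) (by fun_prop)
  rw [hlaw k] at hmap
  rw [← hmap]
  exact integral_dotProduct_self_multivariateGaussian_le (hS k)

end SecondMoment

theorem transformed_SSR_as_finite_general {n p : ℕ}
    (Λ : ℕ → Matrix (Fin n) (Fin n) ℝ) (hΛ : ∀ k, (Λ k).PosDef)
    (hΛtr : Summable fun k => (Λ k).trace)
    (X : Matrix (Fin n) (Fin p) ℝ)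
    (β : ℕ → Fin p → ℝ) (hβ : Summable fun k => ∑ i, (β k i) ^ 2)
    -- the W construction (sequences indexed by `k ≥ 1`, formalized as `k+1` for `k : ℕ`)
    (Ψ : ℕ → Matrix (Fin n) (Fin n) ℝ) (hΨ : ∀ k, Ψ k * (Ψ k)ᵀ = 1)
    (ωΛ : ℕ → Fin n → ℝ) (hωΛpos : ∀ k i, 0 < ωΛ k i)
    (hΛspec : ∀ k, Λ k = Ψ k * diagonal (ωΛ k) * (Ψ k)ᵀ)
    (ωW : ℕ → Fin n → ℝ) (hωWpos : ∀ k i, 0 < ωW k i)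
    (W : ℕ → Matrix (Fin n) (Fin n) ℝ)
    (hW : ∀ k, W k = Ψ k * diagonal (ωW k) * (Ψ k)ᵀ)
    -- Condition (C2)
    (M c : ℝ) (hc : 0 < c)
    (ρ : Fin n → ℝ) (hρ : ∀ i, 0 ≤ ρ i) (ϱ : Fin n → ℝ) (hϱ : ∀ i, 1 < ϱ i)
    (hCW : ∀ (k : ℕ) i, ωW k i ≤ M * ((k : ℝ) + 1) ^ (-(ρ i + ϱ i)))
    (hCΛ : ∀ (k : ℕ) i, c * ((k : ℝ) + 1) ^ (-ρ i) ≤ ωΛ k i)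
    -- the random vectors
    {Ω : Type*} [MeasurableSpace Ω] (P : Measure Ω)
    (Y : ℕ → Ω → Fin n → ℝ) (hYmeas : ∀ k, Measurable (Y k))
    (hYlaw : ∀ k, P.map (Y k) = multivariateGaussian (X.mulVec (β k)) (Λ k))
    (Mk : ℕ → Matrix (Fin n) (Fin n) ℝ)
    (hMk : ∀ k, Mk k = 1 - X * (Xᵀ * (Λ k)⁻¹ * X)⁻¹ * Xᵀ * (Λ k)⁻¹)
    :
    (Summable fun k =>
        ∫ ω, Y k ω ⬝ᵥ ((W k)ᵀ * (Λ k)⁻¹ * W k - (W k)ᵀ * (Mk k)ᵀ * (Λ k)⁻¹ * Mk k * W k).mulVec (Y k ω) ∂P) ∧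
    (∀ᵐ ω ∂P, Summable fun k =>
        Y k ω ⬝ᵥ ((W k)ᵀ * (Λ k)⁻¹ * W k - (W k)ᵀ * (Mk k)ᵀ * (Λ k)⁻¹ * Mk k * W k).mulVec (Y k ω)) := by
  obtain rfl : Mk = fun k => residualMaker (Λ k) X := funext hMk
  have hC2 : ∀ k i, ωW k i * (ωΛ k i)⁻¹ * ωW k i ≤ M ^ 2 / c := fun k i =>
    mul_inv_mul_le_of_rpow_bounds hc (by simp) (by linarith [hρ i, hϱ i]) (hωWpos k i).le
      (hCW k i) (hCΛ k i)
  have hquad : ∀ k y, y ⬝ᵥ ssrMatrix (Λ k) X (W k) *ᵥ y ≤ M ^ 2 / c * (y ⬝ᵥ y) := by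
    intro k y
    rw [hΛspec k, hW k]
    exact dotProduct_ssrMatrix_conj_diagonal_mulVec_le (hΨ k) (hωΛpos k) (hC2 k) X y
  have hmean : Summable fun k => X *ᵥ β k ⬝ᵥ X *ᵥ β k :=
    (hβ.mul_left (∑ i, ∑ j, X i j ^ 2)).of_nonneg_of_le
      (fun k => dotProduct_self_star_nonneg _) fun k =>
      (mulVec_dotProduct_self_le X (β k)).trans_eq (by simp only [dotProduct, sq])
  exact summable_integral_and_ae_summable_of_le_mul
    (fun k => (by fun_prop :
      Measurable fun ω => Y k ω ⬝ᵥ ssrMatrix (Λ k) X (W k) *ᵥ Y k ω).aestronglyMeasurable)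
    (fun k ω =>
      (posSemidef_ssrMatrix (hΛ k).posSemidef X (W k)).dotProduct_mulVec_nonneg (Y k ω))
    (fun k ω => hquad k (Y k ω))
    (fun k => integrable_dotProduct_self_of_map_eq (hYmeas k) (hΛ k).posSemidef (hYlaw k))
    (summable_integral_dotProduct_self hYmeas (fun k => (hΛ k).posSemidef) hYlaw hmean hΛtr)

/-- Under the `W` construction, Condition (C2), Condition (D)
and square-summability of `(βₖ)`, with `Mₖ = I − X(XᵀΛₖ⁻¹X)⁻¹XᵀΛₖ⁻¹`, the
expected transformed sum of squares due to regression
`Σₖ E[Yₖᵀ(WₖᵀΛₖ⁻¹Wₖ − WₖᵀMₖᵀΛₖ⁻¹MₖWₖ)Yₖ]` is finite, and the corresponding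
random series converges almost surely. -/
theorem transformed_SSR_as_finite {n p : ℕ} (hn : 0 < n) (hp : 0 < p)
    (Λ : ℕ → Matrix (Fin n) (Fin n) ℝ) (hΛ : ∀ k, (Λ k).PosDef)
    (hΛtr : Summable fun k => (Λ k).trace)
    (X : Matrix (Fin n) (Fin p) ℝ) (hX : ∀ k, IsUnit (Xᵀ * (Λ k)⁻¹ * X))
    (β : ℕ → Fin p → ℝ) (hβ : Summable fun k => ∑ i, (β k i) ^ 2)
    -- the W construction (sequences indexed by `k ≥ 1`, formalized as `k+1` for `k : ℕ`)
    (Ψ : ℕ → Matrix (Fin n) (Fin n) ℝ) (hΨ : ∀ k, Ψ k * (Ψ k)ᵀ = 1)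
    (ωΛ : ℕ → Fin n → ℝ) (hωΛpos : ∀ k i, 0 < ωΛ k i)
    (hΛspec : ∀ k, Λ k = Ψ k * diagonal (ωΛ k) * (Ψ k)ᵀ)
    (ωW : ℕ → Fin n → ℝ) (hωWpos : ∀ k i, 0 < ωW k i)
    (W : ℕ → Matrix (Fin n) (Fin n) ℝ)
    (hW : ∀ k, W k = Ψ k * diagonal (ωW k) * (Ψ k)ᵀ)
    -- Condition (C2)
    (M c : ℝ) (hM : 0 < M) (hc : 0 < c)
    (ρ : Fin n → ℝ) (hρ : ∀ i, 0 ≤ ρ i) (ϱ : Fin n → ℝ) (hϱ : ∀ i, 1 < ϱ i)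
    (hCW : ∀ (k : ℕ) i, ωW k i ≤ M * ((k : ℝ) + 1) ^ (-(ρ i + ϱ i)))
    (hCΛ : ∀ (k : ℕ) i, c * ((k : ℝ) + 1) ^ (-ρ i) ≤ ωΛ k i)
    -- Condition (D)
    (hD : Summable fun k => ((Xᵀ * (Λ k)⁻¹ * X)⁻¹).trace)
    -- the random vectors
    {Ω : Type*} [MeasurableSpace Ω] (P : Measure Ω) [IsProbabilityMeasure P]
    (Y : ℕ → Ω → Fin n → ℝ) (hYmeas : ∀ k, Measurable (Y k))
    (hYindep : iIndepFun Y P)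
    (hYlaw : ∀ k, P.map (Y k) = multivariateGaussian (X.mulVec (β k)) (Λ k))
    (Mk : ℕ → Matrix (Fin n) (Fin n) ℝ)
    (hMk : ∀ k, Mk k = 1 - X * (Xᵀ * (Λ k)⁻¹ * X)⁻¹ * Xᵀ * (Λ k)⁻¹)
    :
    (Summable fun k =>
        ∫ ω, Y k ω ⬝ᵥ ((W k)ᵀ * (Λ k)⁻¹ * W k - (W k)ᵀ * (Mk k)ᵀ * (Λ k)⁻¹ * Mk k * W k).mulVec (Y k ω) ∂P) ∧
    (∀ᵐ ω ∂P, Summable fun k =>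
        Y k ω ⬝ᵥ ((W k)ᵀ * (Λ k)⁻¹ * W k - (W k)ᵀ * (Mk k)ᵀ * (Λ k)⁻¹ * Mk k * W k).mulVec (Y k ω)) :=
  transformed_SSR_as_finite_general Λ hΛ hΛtr X β hβ Ψ hΨ ωΛ hωΛpos hΛspec ωW hωWpos W hW M c hc ρ
    hρ ϱ hϱ hCW hCΛ P Y hYmeas hYlaw Mk hMk
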